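/- arXiv:1906.06494 — 2 statements merged into one kernel-verified Lean document; each statement's English description precedes it below -/
import Mathlib

section
/- For the dihedral group I_2(2p) acting on ℝ², the polynomials p_1(X) = X_1² + X_2² and p_2(X) = ∑_{j=1}^{p} (X_1 cos 2jθ + X_2 sin 2jθ)^p (with θ = π/(2p)) satisfy: the coefficient of X_1^p in p_2 is ∑_{j=1}^{p} (cos 2jθ)^p, and this coefficient is nonzero. -/
/-!
Only the `k = p` term of the binomial expansion of `(a X₁ + b X₂)^p` contributes to `X₁^p`, so
the coefficient is `∑ⱼ cos(2jθ)^p = ∑_{j=1}^p cos(jπ/p)^p`. For even `p` every term is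
nonnegative and the last one is `cos π ^ p = 1`. For odd `p`, the reflection `j ↦ p - j` turns
`cos(jπ/p)^p` into its negative, so `∑_{j=0}^p cos(jπ/p)^p = 0` and the sum from `j = 1` is `-1`.
-/

open MvPolynomial Finset Real

theorem coeff_single_pow_C_mul_X_add_C_mul_X {R σ : Type*} [CommSemiring R] {i j : σ}
    (hij : i ≠ j) (a b : R) (n : ℕ) :
    coeff (Finsupp.single i n) ((C a * X i + C b * X j) ^ n) = a ^ n := by
  classical
  rw [add_pow, coeff_sum, sum_eq_single n]
  · rw [mul_pow, ← C_pow, C_mul_X_pow_eq_monomial]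
    simp
  · intro k _ hkn
    have hexp : Finsupp.single i k + Finsupp.single j (n - k) ≠ Finsupp.single i n := fun h ↦
      hkn (by simpa [hij] using DFunLike.congr_fun h i)
    rw [mul_comm, ← map_natCast C, coeff_C_mul, mul_pow, mul_pow, ← C_pow, ← C_pow,
      C_mul_X_pow_eq_monomial, C_mul_X_pow_eq_monomial, monomial_mul, coeff_monomial,
      if_neg hexp, mul_zero]
  · simp

section CosSums

variable {n k : ℕ}

theorem sum_range_cos_mul_pi_div_pow_of_odd (hn : n ≠ 0) (hk : Odd k) :
    ∑ j ∈ range (n + 1), cos (j * π / n) ^ k = 0 := by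
  have hreflect : ∀ j ∈ range (n + 1),
      cos (↑(n + 1 - 1 - j) * π / n) ^ k = -cos (j * π / n) ^ k := by
    intro j hj
    rw [Nat.add_sub_cancel, Nat.cast_sub (Nat.lt_succ_iff.mp (mem_range.mp hj)), sub_mul,
      sub_div, mul_div_cancel_left₀ _ (Nat.cast_ne_zero.mpr hn), cos_pi_sub, hk.neg_pow]
  have hsum := sum_range_reflect (fun j : ℕ ↦ cos (j * π / n) ^ k) (n + 1)
  rw [sum_congr rfl hreflect, sum_neg_distrib] at hsum
  linarith

theorem sum_Icc_cos_mul_pi_div_pow_of_odd (hn : n ≠ 0) (hk : Odd k) :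
    ∑ j ∈ Icc 1 n, cos (j * π / n) ^ k = -1 := by
  have hsum := sum_range_cos_mul_pi_div_pow_of_odd hn hk
  rw [range_eq_Ico, sum_eq_sum_Ico_succ_bot n.add_one_pos, zero_add, Ico_add_one_right_eq_Icc,
    Nat.cast_zero, zero_mul, zero_div, cos_zero, one_pow] at hsum
  linarith

theorem sum_Icc_cos_mul_pi_div_pow_pos_of_even (hn : n ≠ 0) (hk : Even k) :
    0 < ∑ j ∈ Icc 1 n, cos (j * π / n) ^ k := by
  refine sum_pos' (fun j _ ↦ hk.pow_nonneg _)
    ⟨n, mem_Icc.mpr ⟨Nat.one_le_iff_ne_zero.mpr hn, le_rfl⟩, ?_⟩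
  rw [mul_div_cancel_left₀ _ (Nat.cast_ne_zero.mpr hn), cos_pi, hk.neg_one_pow]
  exact one_pos

theorem sum_Icc_cos_mul_pi_div_pow_ne_zero (hn : n ≠ 0) :
    ∑ j ∈ Icc 1 n, cos (j * π / n) ^ k ≠ 0 := by
  rcases Nat.even_or_odd k with hk | hk
  · exact (sum_Icc_cos_mul_pi_div_pow_pos_of_even hn hk).ne'
  · rw [sum_Icc_cos_mul_pi_div_pow_of_odd hn hk]
    exact neg_ne_zero.mpr one_ne_zero

end CosSums

/-- for the dihedral group `I₂(2p)` on `ℝ²` with `θ = π/(2p)`, in the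
invariant polynomial `p₂(X) = ∑_{j=1}^p (X₁ cos 2jθ + X₂ sin 2jθ)^p` the coefficient of
`X₁^p` is `∑_{j=1}^p (cos 2jθ)^p`, and this coefficient is nonzero. -/
theorem statement3 (p : ℕ) (hp : 1 ≤ p) (θ : ℝ) (hθ : θ = Real.pi / (2 * p)) :
    MvPolynomial.coeff (Finsupp.single (0 : Fin 2) p)
      (∑ j ∈ Finset.Icc 1 p,
        (MvPolynomial.C (Real.cos (2 * (j : ℝ) * θ)) * MvPolynomial.X (0 : Fin 2)
          + MvPolynomial.C (Real.sin (2 * (j : ℝ) * θ)) * MvPolynomial.X 1) ^ p)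
      = ∑ j ∈ Finset.Icc 1 p, Real.cos (2 * (j : ℝ) * θ) ^ p
    ∧ ∑ j ∈ Finset.Icc 1 p, Real.cos (2 * (j : ℝ) * θ) ^ p ≠ 0 := by
  have hp0 : p ≠ 0 := Nat.one_le_iff_ne_zero.mp hp
  have hangle : ∀ j : ℕ, 2 * (j : ℝ) * θ = j * π / p := fun j ↦ by
    rw [hθ]
    field_simp
  refine ⟨?_, ?_⟩
  · rw [coeff_sum]
    exact sum_congr rfl fun j _ ↦ coeff_single_pow_C_mul_X_add_C_mul_X (by decide) _ _ _
  · simp only [hangle]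
    exact sum_Icc_cos_mul_pi_div_pow_ne_zero hp0
end

section
/- If K ⊂ ℝ^n is a Whitney 1-regular compact set, then on the space E^r(K) of Whitney fields of class C^r on K, the seminorm ‖A‖^r_K (including the Whitney difference quotients) and the sup-seminorm |A|^r_K = sup_{x ∈ K, |k| ≤ r} |a_k(x)| are equivalent. -/
/-!
Induction on `r - |q|`. If `|q| = r` the remainder `(R_x A)^q(y) = a_q(y) - a_q(x)` is at most `2M`.
Otherwise join `x` to `y` inside `K` by a chain `x = p₀, …, p_N = y` of small mesh and total length
`L ≤ c|y - x|`, sampled from a short rectifiable arc, and telescope along it, re-expanding each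
Taylor polynomial at the next point:
`(R_x A)^q(y) = ∑_j ∑_i (R_{pᵢ} A)^{q+j}(pᵢ₊₁) (y - pᵢ₊₁)^j / j!`.
For `j = 0` the inner sum is `o(L^{r-|q|})` by the Whitney condition as the mesh tends to zero; for
`|q + j| < r` it is `O(M L^{r-|q|})` by induction, since the step lengths add up to at most `L`;
for `|q + j| = r` the remainder is the difference `a_{q+j}(pᵢ₊₁) - a_{q+j}(pᵢ)`, and summation by
parts bounds the sum by `M` times the variation of `(y - pᵢ₊₁)^j / j!` along the chain, which is
again `O(L^{|j|})`.
-/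

open scoped BigOperators
open MvPolynomial

noncomputable section

/-- The length `|k| = ∑ kᵢ` of a multi-index. -/
def deg {n : ℕ} (k : Fin n → ℕ) : ℕ := ∑ i, k i

/-- The finset of multi-indices of length at most `m`. -/
def MIdx (n m : ℕ) : Finset (Fin n → ℕ) :=
  (Fintype.piFinset fun _ => Finset.range (m + 1)).filter fun k => deg k ≤ m

/-- The factorial `k! = ∏ kᵢ!` of a multi-index. -/
def mfact {n : ℕ} (k : Fin n → ℕ) : ℕ := ∏ i, Nat.factorial (k i)

/-- The power `y^k = ∏ yᵢ^kᵢ`. -/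
def mpow {n : ℕ} (y : Fin n → ℝ) (k : Fin n → ℕ) : ℝ := ∏ i, y i ^ k i

/-- A jet: a family of (coefficient) functions indexed by multi-indices. -/
abbrev Jet (n : ℕ) := (Fin n → ℕ) → (Fin n → ℝ) → ℝ

/-- The polynomial `(D^q A)_x` of a jet `a` of order `m`, evaluated at `x'`. -/
def Dq {n : ℕ} (a : Jet n) (m : ℕ) (q : Fin n → ℕ) (x x' : Fin n → ℝ) : ℝ :=
  ∑ k ∈ MIdx n m,
    if ∀ i, q i ≤ k i then a k x * mpow (x' - x) (k - q) / (mfact (k - q) : ℝ) else 0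

/-- The Whitney remainder `(R_x A)^q (x') = (D^q A)_{x'}(x') - (D^q A)_x(x')`. -/
def WRem {n : ℕ} (a : Jet n) (m : ℕ) (q : Fin n → ℕ) (x x' : Fin n → ℝ) : ℝ :=
  Dq a m q x' x' - Dq a m q x x'

/-- All coefficients of order ≤ m of the jet are continuous on `E`. -/
def JetContinuousOn {n : ℕ} (a : Jet n) (m : ℕ) (E : Set (Fin n → ℝ)) : Prop :=
  ∀ k, deg k ≤ m → ContinuousOn (a k) E

/-- The Whitney conditions `(W_q^r)` on a set `K` for a jet of order `m`:
`(R_x A)^q (x') = o(|x' - x|^{r - |q|})` uniformly on `K`, for all `|q| ≤ r`. -/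
def WhitneyCondOn {n : ℕ} (a : Jet n) (r m : ℕ) (K : Set (Fin n → ℝ)) : Prop :=
  ∀ q, deg q ≤ r → ∀ ε > (0 : ℝ), ∃ δ > (0 : ℝ), ∀ x ∈ K, ∀ x' ∈ K,
    ‖x' - x‖ ≤ δ → |WRem a m q x x'| ≤ ε * ‖x' - x‖ ^ (r - deg q)

/-- `a` is an `r`-regular jet of order `m` on `E`: continuous coefficients and the
Whitney conditions `(W_q^r)` hold on every compact subset of `E`. -/
def RegularJetOn {n : ℕ} (a : Jet n) (r m : ℕ) (E : Set (Fin n → ℝ)) : Prop :=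
  JetContinuousOn a m E ∧ ∀ K ⊆ E, IsCompact K → WhitneyCondOn a r m K

/-- Evaluation of a polynomial map `ℝⁿ → ℝⁿ` given by the polynomials `p i`. -/
def PmF {n : ℕ} (p : Fin n → MvPolynomial (Fin n) ℝ) (x : Fin n → ℝ) : Fin n → ℝ :=
  fun i => MvPolynomial.eval x (p i)

/-- A compact set is Whitney 1-regular if any two of its points can be joined inside it
by a rectifiable arc of length at most a constant times their Euclidean distance. -/
def WhitneyOneRegular {n : ℕ} (K : Set (Fin n → ℝ)) : Prop :=
  ∃ c : ℝ, 0 < c ∧ ∀ x ∈ K, ∀ y ∈ K, ∃ γ : ℝ → (Fin n → ℝ),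
    ContinuousOn γ (Set.Icc 0 1) ∧ γ 0 = x ∧ γ 1 = y ∧
    Set.MapsTo γ (Set.Icc 0 1) K ∧
    eVariationOn γ (Set.Icc 0 1) ≤ ENNReal.ofReal (c * ‖y - x‖)

open Finset

variable {n : ℕ}

section MultiIndex

lemma le_deg (k : Fin n → ℕ) (i : Fin n) : k i ≤ deg k :=
  single_le_sum (fun _ _ => Nat.zero_le _) (mem_univ i)

lemma mem_MIdx {k : Fin n → ℕ} {m : ℕ} : k ∈ MIdx n m ↔ deg k ≤ m := by
  simp only [MIdx, mem_filter, Fintype.mem_piFinset, mem_range, and_iff_right_iff_imp]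
  exact fun h i => Nat.lt_succ_of_le ((le_deg k i).trans h)

lemma deg_add (k l : Fin n → ℕ) : deg (k + l) = deg k + deg l := sum_add_distrib

lemma deg_sub_add_deg {k l : Fin n → ℕ} (h : l ≤ k) : deg (k - l) + deg l = deg k := by
  rw [← deg_add, tsub_add_cancel_of_le h]

@[simp] lemma deg_zero : deg (0 : Fin n → ℕ) = 0 := by simp [deg]

lemma deg_eq_zero_iff {k : Fin n → ℕ} : deg k = 0 ↔ k = 0 := by
  simp [deg, sum_eq_zero_iff, funext_iff]

lemma deg_mono {k l : Fin n → ℕ} (h : l ≤ k) : deg l ≤ deg k :=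
  sum_le_sum fun i _ => h i

lemma Iic_subset_MIdx {k : Fin n → ℕ} {m : ℕ} (hk : deg k ≤ m) : Iic k ⊆ MIdx n m :=
  fun _ hl => mem_MIdx.2 ((deg_mono (mem_Iic.1 hl)).trans hk)

lemma one_le_card_MIdx (r : ℕ) : 1 ≤ #(MIdx n r) :=
  card_pos.2 ⟨0, mem_MIdx.2 (by simp)⟩

end MultiIndex

section Monomial

@[simp] lemma mpow_zero (y : Fin n → ℝ) : mpow y 0 = 1 := by simp [mpow]

@[simp] lemma mfact_zero : mfact (0 : Fin n → ℕ) = 1 := by simp [mfact]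

lemma mpow_zero_left {k : Fin n → ℕ} (hk : k ≠ 0) : mpow 0 k = 0 := by
  obtain ⟨i, hi⟩ := Function.ne_iff.1 hk
  exact prod_eq_zero (mem_univ i) (by simp [zero_pow hi])

lemma mpow_div_mfact (y : Fin n → ℝ) (k : Fin n → ℕ) :
    mpow y k / mfact k = ∏ i, y i ^ k i / (k i).factorial := by
  simp [mpow, mfact, prod_div_distrib]

lemma abs_mpow_div_mfact_le (y : Fin n → ℝ) (k : Fin n → ℕ) :
    |mpow y k / mfact k| ≤ ‖y‖ ^ deg k := by
  rw [mpow_div_mfact, abs_prod, deg, ← prod_pow_eq_pow_sum]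
  refine prod_le_prod (fun i _ => abs_nonneg _) fun i _ => ?_
  rw [abs_div, abs_pow, Nat.abs_cast]
  exact (div_le_self (by positivity) (mod_cast (k i).factorial_pos)).trans
    (pow_le_pow_left₀ (abs_nonneg _) (norm_le_pi_norm y i) _)

lemma add_pow_div_factorial (u v : ℝ) (k : ℕ) :
    (u + v) ^ k / k.factorial =
      ∑ t ∈ Iic k, u ^ (k - t) / (k - t).factorial * (v ^ t / t.factorial) := by
  rw [add_comm, add_pow, sum_div, ← Nat.range_succ_eq_Iic]
  refine sum_congr rfl fun t ht => ?_
  rw [Nat.cast_choose ℝ (Nat.lt_succ_iff.1 (mem_range.1 ht))]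
  field_simp

lemma mpow_add_div_mfact (u v : Fin n → ℝ) (k : Fin n → ℕ) :
    mpow (u + v) k / mfact k =
      ∑ l ∈ Iic k, mpow u (k - l) / mfact (k - l) * (mpow v l / mfact l) := by
  simp only [mpow_div_mfact, ← prod_mul_distrib]
  simp_rw [Pi.add_apply, add_pow_div_factorial]
  rw [prod_univ_sum]
  rfl

lemma abs_mpow_add_div_sub_le (u v : Fin n → ℝ) (k : Fin n → ℕ) :
    |mpow (u + v) k / mfact k - mpow u k / mfact k| ≤
      ∑ l ∈ (Iic k).erase 0, ‖u‖ ^ deg (k - l) * ‖v‖ ^ deg l := by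
  rw [mpow_add_div_mfact, ← add_sum_erase _ _ (mem_Iic.2 (zero_le (a := k)))]
  simp only [tsub_zero, mpow_zero, mfact_zero, Nat.cast_one, div_one, mul_one,
    add_sub_cancel_left]
  refine (abs_sum_le_sum_abs _ _).trans (sum_le_sum fun l _ => ?_)
  rw [abs_mul]
  exact mul_le_mul (abs_mpow_div_mfact_le _ _) (abs_mpow_div_mfact_le _ _)
    (abs_nonneg _) (by positivity)

end Monomial

section Taylor

variable (a : Jet n) (m : ℕ)

lemma Dq_eq_sum_filter (q : Fin n → ℕ) (x y : Fin n → ℝ) :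
    Dq a m q x y = ∑ k ∈ (MIdx n m).filter (fun k => ∀ i, q i ≤ k i),
      a k x * (mpow (y - x) (k - q) / mfact (k - q)) := by
  simp only [Dq, sum_filter, mul_div_assoc]

lemma Dq_eq_sum_Dq_mul (q : Fin n → ℕ) (x z y : Fin n → ℝ) :
    Dq a m q x y = ∑ l ∈ MIdx n (m - deg q), Dq a m (q + l) x z * (mpow (y - z) l / mfact l) := by
  have hyx : y - x = (z - x) + (y - z) := by abel
  simp only [Dq_eq_sum_filter, hyx, mpow_add_div_mfact, mul_sum, sum_mul]
  refine sum_comm' (fun k l => ?_) |>.trans (sum_congr rfl fun l _ => sum_congr rfl fun k _ => ?_)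
  · simp only [mem_filter, mem_MIdx, mem_Iic, Pi.le_def, Pi.add_apply, Pi.sub_apply]
    constructor
    · rintro ⟨⟨hk, hqk⟩, hl⟩
      refine ⟨⟨hk, fun i => by have := hl i; have := hqk i; omega⟩, ?_⟩
      have := deg_sub_add_deg (show q ≤ k from hqk)
      have := deg_mono (show l ≤ k - q from hl)
      omega
    · rintro ⟨⟨hk, hqlk⟩, -⟩
      exact ⟨⟨hk, fun i => by have := hqlk i; omega⟩, fun i => by have := hqlk i; omega⟩
  · rw [tsub_add_eq_tsub_tsub]
    ring

lemma Dq_of_deg_eq {q : Fin n → ℕ} (hq : deg q = m) (x y : Fin n → ℝ) : Dq a m q x y = a q x := by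
  rw [Dq_eq_sum_filter, sum_eq_single_of_mem q (by simp [mem_MIdx, hq]), tsub_self]
  · simp
  · simp only [mem_filter, mem_MIdx]
    rintro k ⟨hk, hqk⟩ hne
    have hkq : deg (k - q) = 0 := by have := deg_sub_add_deg (show q ≤ k from hqk); omega
    exact absurd (le_antisymm (tsub_eq_zero_iff_le.1 (deg_eq_zero_iff.1 hkq)) hqk) hne

lemma WRem_of_deg_eq {q : Fin n → ℕ} (hq : deg q = m) (x y : Fin n → ℝ) :
    WRem a m q x y = a q y - a q x := by
  rw [WRem, Dq_of_deg_eq a m hq, Dq_of_deg_eq a m hq]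

lemma Dq_sub_Dq_eq_sum_WRem (q : Fin n → ℕ) (w z y : Fin n → ℝ) :
    Dq a m q z y - Dq a m q w y =
      ∑ l ∈ MIdx n (m - deg q), WRem a m (q + l) w z * (mpow (y - z) l / mfact l) := by
  rw [Dq_eq_sum_Dq_mul a m q z z y, Dq_eq_sum_Dq_mul a m q w z y, ← sum_sub_distrib]
  simp only [WRem, sub_mul]

lemma WRem_telescope (q : Fin n → ℕ) (p : ℕ → Fin n → ℝ) (N : ℕ) :
    WRem a m q (p 0) (p N) = ∑ l ∈ MIdx n (m - deg q), ∑ i ∈ range N,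
      WRem a m (q + l) (p i) (p (i + 1)) * (mpow (p N - p (i + 1)) l / mfact l) := by
  rw [sum_comm, WRem, ← sum_range_sub (fun i => Dq a m q (p i) (p N))]
  exact sum_congr rfl fun i _ => Dq_sub_Dq_eq_sum_WRem a m q _ _ _

end Taylor

lemma sum_pow_le_pow_sum_of_nonneg {ι R : Type*} [CommSemiring R] [PartialOrder R]
    [IsOrderedRing R] {s : Finset ι} {f : ι → R}
    (hf : ∀ i ∈ s, 0 ≤ f i) {e : ℕ} (he : 1 ≤ e) :
    ∑ i ∈ s, f i ^ e ≤ (∑ i ∈ s, f i) ^ e := by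
  obtain ⟨e, rfl⟩ := Nat.exists_eq_add_of_le' he
  rw [pow_succ, mul_sum]
  refine sum_le_sum fun i hi => ?_
  rw [pow_succ]
  refine mul_le_mul_of_nonneg_right ?_ (hf i hi)
  exact pow_le_pow_left₀ (hf i hi) (single_le_sum hf hi) _

lemma abs_sum_range_sub_mul_le {R : Type*} [CommRing R] [LinearOrder R] [IsStrictOrderedRing R]
    {b c : ℕ → R} {B : R} {N : ℕ} (hb : ∀ i, |b i| ≤ B)
    (hc : c N = 0) :
    |∑ i ∈ range N, (b (i + 1) - b i) * c i| ≤
      B * (|c 0| + ∑ i ∈ range N, |c (i + 1) - c i|) := by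
  have hparts : ∑ i ∈ range N, (b (i + 1) - b i) * c i =
      -(b 0 * c 0) - ∑ i ∈ range N, b (i + 1) * (c (i + 1) - c i) := by
    have h := sum_range_sub (fun i => b i * c i) N
    rw [hc, mul_zero, zero_sub] at h
    rw [← h, eq_sub_iff_add_eq, ← sum_add_distrib]
    exact sum_congr rfl fun i _ => by ring
  have hB : 0 ≤ B := (abs_nonneg _).trans (hb 0)
  rw [hparts, mul_add, mul_sum]
  refine (abs_sub _ _).trans
    (add_le_add ?_ ((abs_sum_le_sum_abs _ _).trans (sum_le_sum fun i _ => ?_)))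
  · rw [abs_neg, abs_mul]
    exact mul_le_mul_of_nonneg_right (hb 0) (abs_nonneg _)
  · rw [abs_mul]
    exact mul_le_mul_of_nonneg_right (hb _) (abs_nonneg _)

lemma le_of_forall_pos_le_mul_add {R : Type*} [Field R] [LinearOrder R] [IsStrictOrderedRing R]
    {x b A : R} (hA : 0 ≤ A) (h : ∀ ε > 0, x ≤ ε * A + b) :
    x ≤ b := by
  refine le_of_forall_pos_le_add fun ε hε => ?_
  have hεA : ε / (A + 1) * A ≤ ε := by
    rw [div_mul_eq_mul_div, div_le_iff₀ (by positivity)]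
    nlinarith
  linarith [h (ε / (A + 1)) (by positivity)]

section Chain

variable {E : Type*} [SeminormedAddCommGroup E]

structure IsFineChain (K : Set E) (x y : E) (N : ℕ) (δ L : ℝ) (p : ℕ → E) : Prop where
  zero : p 0 = x
  eq_of_le : ∀ i, N ≤ i → p i = y
  mem : ∀ i, p i ∈ K
  norm_sub_le : ∀ i, ‖p (i + 1) - p i‖ ≤ δ
  sum_norm_sub_le : ∀ m, ∑ i ∈ range m, ‖p (i + 1) - p i‖ ≤ L

namespace IsFineChain

variable {K : Set E} {x y : E} {N : ℕ} {δ L : ℝ} {p : ℕ → E}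

lemma tail (hp : IsFineChain K x y N δ L p) :
    IsFineChain K (p 1) y (N - 1) δ L (fun i => p (i + 1)) where
  zero := rfl
  eq_of_le i hi := hp.eq_of_le _ (by omega)
  mem i := hp.mem _
  norm_sub_le i := hp.norm_sub_le _
  sum_norm_sub_le m := by
    have h := hp.sum_norm_sub_le (m + 1)
    rw [sum_range_succ'] at h
    linarith [norm_nonneg (p 1 - p 0)]

lemma norm_sub_le_length (hp : IsFineChain K x y N δ L p) (i : ℕ) : ‖y - p i‖ ≤ L := by
  rw [← hp.eq_of_le (max N i) (le_max_left _ _), ← dist_eq_norm, dist_comm]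
  refine (dist_le_Ico_sum_dist p (le_max_right N i)).trans
    ((sum_le_sum_of_subset_of_nonneg (t := range (max N i)) ?_ fun _ _ _ => dist_nonneg).trans ?_)
  · exact fun k hk => mem_range.2 (mem_Ico.1 hk).2
  · simpa only [dist_eq_norm'] using hp.sum_norm_sub_le (max N i)

lemma sum_norm_sub_pow_le (hp : IsFineChain K x y N δ L p) (m : ℕ) {e : ℕ} (he : 1 ≤ e) :
    ∑ i ∈ range m, ‖p (i + 1) - p i‖ ^ e ≤ L ^ e :=
  (sum_pow_le_pow_sum_of_nonneg (fun _ _ => norm_nonneg _) he).trans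
    (pow_le_pow_left₀ (sum_nonneg fun _ _ => norm_nonneg _) (hp.sum_norm_sub_le m) e)

end IsFineChain

end Chain

section Arc

variable {E : Type*} [SeminormedAddCommGroup E]

lemma exists_isFineChain_of_arc {K : Set E} {x y : E} {γ : ℝ → E}
    (hγ : ContinuousOn γ (Set.Icc 0 1)) (h0 : γ 0 = x) (h1 : γ 1 = y)
    (hγK : Set.MapsTo γ (Set.Icc 0 1) K) {L : ℝ} (hL : 0 ≤ L)
    (hvar : eVariationOn γ (Set.Icc 0 1) ≤ ENNReal.ofReal L) {δ : ℝ} (hδ : 0 < δ) :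
    ∃ N p, IsFineChain K x y N δ L p := by
  obtain ⟨η, hη, hγη⟩ := Metric.uniformContinuousOn_iff.1
    (isCompact_Icc.uniformContinuousOn_of_continuous hγ) δ hδ
  obtain ⟨N, hN⟩ := exists_nat_one_div_lt hη
  have hN0 : (0 : ℝ) < N + 1 := by positivity
  set u : ℕ → ℝ := fun i => min (i / (N + 1)) 1 with hu_def
  have hu : ∀ i, u i ∈ Set.Icc (0 : ℝ) 1 := fun i => ⟨by positivity, min_le_right _ _⟩
  have hmono : Monotone u := fun i j hij =>
    min_le_min_right _ (div_le_div_of_nonneg_right (Nat.cast_le.2 hij) hN0.le)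
  refine ⟨N + 1, fun i => γ (u i), ⟨by simp [u, h0], fun i hi => ?_, fun i => hγK (hu i),
    fun i => ?_, fun m => ?_⟩⟩
  · have hiN : (N : ℝ) + 1 ≤ i := by exact_mod_cast hi
    simp only [u, min_eq_right ((one_le_div hN0).2 hiN), h1]
  · rw [← dist_eq_norm]
    refine (hγη _ (hu _) _ (hu _) ?_).le
    refine (abs_min_sub_min_le_max _ _ _ _).trans_lt ?_
    rw [sub_self, abs_zero, max_eq_left (abs_nonneg _), Nat.cast_succ, ← sub_div,
      add_sub_cancel_left, abs_of_pos (by positivity)]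
    exact hN
  · have h := (eVariationOn.sum_le (f := γ) (n := m) hmono hu).trans hvar
    simp only [edist_dist, dist_eq_norm] at h
    rwa [← ENNReal.ofReal_sum_of_nonneg (fun _ _ => norm_nonneg _),
      ENNReal.ofReal_le_ofReal_iff hL] at h

end Arc

def ChainConnected {E : Type*} [SeminormedAddCommGroup E] (K : Set E) (c : ℝ) : Prop :=
  ∀ x ∈ K, ∀ y ∈ K, ∀ δ > 0, ∃ N p, IsFineChain K x y N δ (c * ‖y - x‖) p

lemma WhitneyOneRegular.exists_chainConnected {K : Set (Fin n → ℝ)} (hK : WhitneyOneRegular K) :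
    ∃ c, 1 ≤ c ∧ ChainConnected K c := by
  obtain ⟨c, -, harc⟩ := hK
  refine ⟨max c 1, le_max_right _ _, fun x hx y hy δ hδ => ?_⟩
  obtain ⟨γ, hγ, h0, h1, hγK, hvar⟩ := harc x hx y hy
  have hle : c * ‖y - x‖ ≤ max c 1 * ‖y - x‖ :=
    mul_le_mul_of_nonneg_right (le_max_left _ _) (norm_nonneg _)
  exact exists_isFineChain_of_arc hγ h0 h1 hγK (by positivity)
    (hvar.trans (ENNReal.ofReal_le_ofReal hle)) hδ

namespace IsFineChain

variable {K : Set (Fin n → ℝ)} {x y : Fin n → ℝ} {N : ℕ} {δ L : ℝ} {p : ℕ → Fin n → ℝ}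

lemma length_nonneg (hp : IsFineChain K x y N δ L p) : 0 ≤ L :=
  (norm_nonneg _).trans (hp.norm_sub_le_length 0)

lemma abs_mpow_sub_div_mfact_le (hp : IsFineChain K x y N δ L p) (i : ℕ) (j : Fin n → ℕ) :
    |mpow (y - p i) j / mfact j| ≤ L ^ deg j :=
  (abs_mpow_div_mfact_le _ _).trans
    (pow_le_pow_left₀ (norm_nonneg _) (hp.norm_sub_le_length i) _)

lemma abs_sum_mul_mpow_le (hp : IsFineChain K x y N δ L p) {f : ℕ → ℝ} {A : ℝ} {e : ℕ}
    (hA : 0 ≤ A) (he : 1 ≤ e) (hf : ∀ i, |f i| ≤ A * ‖p (i + 1) - p i‖ ^ e) (j : Fin n → ℕ) :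
    |∑ i ∈ range N, f i * (mpow (y - p (i + 1)) j / mfact j)| ≤ A * L ^ (e + deg j) := by
  have hL := hp.length_nonneg
  calc |∑ i ∈ range N, f i * (mpow (y - p (i + 1)) j / mfact j)|
      ≤ ∑ i ∈ range N, A * ‖p (i + 1) - p i‖ ^ e * L ^ deg j := by
        refine (abs_sum_le_sum_abs _ _).trans (sum_le_sum fun i _ => ?_)
        rw [abs_mul]
        exact mul_le_mul (hf i) (hp.abs_mpow_sub_div_mfact_le _ j) (abs_nonneg _) (by positivity)
    _ = A * L ^ deg j * ∑ i ∈ range N, ‖p (i + 1) - p i‖ ^ e := by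
        rw [mul_sum]; exact sum_congr rfl fun i _ => by ring
    _ ≤ A * L ^ deg j * L ^ e := by gcongr; exact hp.sum_norm_sub_pow_le N he
    _ = A * L ^ (e + deg j) := by ring

lemma sum_abs_sub_mpow_div_mfact_le (hp : IsFineChain K x y N δ L p) (j : Fin n → ℕ) :
    ∑ i ∈ range N, |mpow (y - p (i + 2)) j / mfact j - mpow (y - p (i + 1)) j / mfact j| ≤
      #((Iic j).erase 0) * L ^ deg j := by
  have hsplit : ∀ i, y - p (i + 1) = (y - p (i + 2)) + (p (i + 2) - p (i + 1)) := fun i => by abel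
  calc ∑ i ∈ range N, |mpow (y - p (i + 2)) j / mfact j - mpow (y - p (i + 1)) j / mfact j|
      ≤ ∑ i ∈ range N, ∑ l ∈ (Iic j).erase 0,
          L ^ deg (j - l) * ‖p (i + 2) - p (i + 1)‖ ^ deg l := by
        refine sum_le_sum fun i _ => ?_
        rw [abs_sub_comm, hsplit i]
        refine (abs_mpow_add_div_sub_le _ _ j).trans (sum_le_sum fun l _ => ?_)
        gcongr
        exact hp.norm_sub_le_length _
    _ = ∑ l ∈ (Iic j).erase 0, L ^ deg (j - l) *
          ∑ i ∈ range N, ‖p (i + 1 + 1) - p (i + 1)‖ ^ deg l := by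
        rw [sum_comm]; simp only [mul_sum]
    _ ≤ ∑ l ∈ (Iic j).erase 0, L ^ deg (j - l) * L ^ deg l := by
        refine sum_le_sum fun l hl => ?_
        obtain ⟨hl0, hlj⟩ := mem_erase.1 hl
        have hdeg : 1 ≤ deg l := Nat.one_le_iff_ne_zero.2 (mt deg_eq_zero_iff.1 hl0)
        have hL := hp.length_nonneg
        gcongr
        exact hp.tail.sum_norm_sub_pow_le N hdeg
    _ = #((Iic j).erase 0) * L ^ deg j := by
        rw [sum_congr rfl fun l hl => by
          rw [← pow_add, deg_sub_add_deg (mem_Iic.1 (mem_of_mem_erase hl))], sum_const, nsmul_eq_mul]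

lemma abs_sum_sub_mul_mpow_le (hp : IsFineChain K x y N δ L p) {b : ℕ → ℝ} {B : ℝ}
    (hb : ∀ i, |b i| ≤ B) {j : Fin n → ℕ} (hj : j ≠ 0) :
    |∑ i ∈ range N, (b (i + 1) - b i) * (mpow (y - p (i + 1)) j / mfact j)| ≤
      B * #(Iic j) * L ^ deg j := by
  have hend : mpow (y - p (N + 1)) j / mfact j = 0 := by
    rw [hp.eq_of_le (N + 1) N.le_succ, sub_self, mpow_zero_left hj, zero_div]
  have hB : 0 ≤ B := (abs_nonneg _).trans (hb 0)
  refine (abs_sum_range_sub_mul_le hb hend).trans ?_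
  rw [← card_erase_add_one (mem_Iic.2 (zero_le (a := j))), mul_assoc]
  gcongr
  rw [Nat.cast_add_one, add_one_mul]
  linarith [hp.abs_mpow_sub_div_mfact_le 1 j, hp.sum_abs_sub_mpow_div_mfact_le j]

end IsFineChain

def remainderConst (n r : ℕ) (c : ℝ) : ℝ := (#(MIdx n r) : ℝ) ^ 2 * c ^ r

lemma one_le_remainderConst (r : ℕ) {c : ℝ} (hc : 1 ≤ c) : 1 ≤ remainderConst n r c :=
  one_le_mul_of_one_le_of_one_le (one_le_pow₀ (mod_cast one_le_card_MIdx r)) (one_le_pow₀ hc)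

section Remainder

variable (a : Jet n) {r : ℕ} {K : Set (Fin n → ℝ)} {M c : ℝ}

lemma abs_WRem_le_of_deg_eq (hM : ∀ k, deg k ≤ r → ∀ x ∈ K, |a k x| ≤ M) {q : Fin n → ℕ}
    (hq : deg q = r) {x y : Fin n → ℝ} (hx : x ∈ K) (hy : y ∈ K) :
    |WRem a r q x y| ≤ 2 * M := by
  rw [WRem_of_deg_eq a r hq, two_mul]
  exact (abs_sub _ _).trans (add_le_add (hM q hq.le y hy) (hM q hq.le x hx))

lemma abs_sum_WRem_mul_mpow_le (hM : ∀ k, deg k ≤ r → ∀ x ∈ K, |a k x| ≤ M)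
    {x y : Fin n → ℝ} {N : ℕ} {δ L : ℝ} {p : ℕ → Fin n → ℝ} (hp : IsFineChain K x y N δ L p)
    {q : Fin n → ℕ} {C : ℝ} (hC : 1 ≤ C)
    (hIH : ∀ q', deg q < deg q' → deg q' < r → ∀ u ∈ K, ∀ v ∈ K,
      |WRem a r q' u v| ≤ C * M * ‖v - u‖ ^ (r - deg q'))
    {j : Fin n → ℕ} (hj0 : j ≠ 0) (hj : deg q + deg j ≤ r) :
    |∑ i ∈ range N, WRem a r (q + j) (p i) (p (i + 1)) * (mpow (y - p (i + 1)) j / mfact j)| ≤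
      #(MIdx n r) * C * M * L ^ (r - deg q) := by
  have hM0 : 0 ≤ M := (abs_nonneg _).trans (hM 0 (by simp) _ (hp.mem 0))
  have hL := hp.length_nonneg
  have hj1 : 1 ≤ deg j := Nat.one_le_iff_ne_zero.2 (mt deg_eq_zero_iff.1 hj0)
  have hN₀ : (1 : ℝ) ≤ #(MIdx n r) := mod_cast one_le_card_MIdx r
  rcases (deg_add q j ▸ hj).lt_or_eq with hlt | heq
  · have h := hp.abs_sum_mul_mpow_le (A := C * M) (by positivity) (by omega)
      (fun i => hIH (q + j) (by rw [deg_add]; omega) hlt _ (hp.mem i) _ (hp.mem _)) j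
    rw [deg_add, show r - (deg q + deg j) + deg j = r - deg q by omega] at h
    refine h.trans ?_
    rw [mul_assoc (#(MIdx n r) : ℝ), mul_assoc (#(MIdx n r) : ℝ)]
    exact le_mul_of_one_le_left (by positivity) hN₀
  · have hIic : (#(Iic j) : ℝ) ≤ #(MIdx n r) := mod_cast card_le_card (Iic_subset_MIdx (by omega))
    simp only [WRem_of_deg_eq a r heq]
    refine (hp.abs_sum_sub_mul_mpow_le (fun i => hM _ heq.le _ (hp.mem i)) hj0).trans ?_
    rw [show deg j = r - deg q by rw [deg_add] at heq; omega]
    calc M * #(Iic j) * L ^ (r - deg q) = 1 * #(Iic j) * M * L ^ (r - deg q) := by ring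
      _ ≤ C * #(MIdx n r) * M * L ^ (r - deg q) := by gcongr
      _ = #(MIdx n r) * C * M * L ^ (r - deg q) := by ring

lemma abs_WRem_le_of_isFineChain (hM : ∀ k, deg k ≤ r → ∀ x ∈ K, |a k x| ≤ M)
    {x y : Fin n → ℝ} {N : ℕ} {δ L : ℝ} {p : ℕ → Fin n → ℝ} (hp : IsFineChain K x y N δ L p)
    {q : Fin n → ℕ} (hq : deg q < r) {ε C : ℝ} (hε : 0 ≤ ε) (hC : 1 ≤ C)
    (hsmall : ∀ u ∈ K, ∀ v ∈ K, ‖v - u‖ ≤ δ → |WRem a r q u v| ≤ ε * ‖v - u‖ ^ (r - deg q))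
    (hIH : ∀ q', deg q < deg q' → deg q' < r → ∀ u ∈ K, ∀ v ∈ K,
      |WRem a r q' u v| ≤ C * M * ‖v - u‖ ^ (r - deg q')) :
    |WRem a r q x y| ≤
      ε * L ^ (r - deg q) + (#(MIdx n r) : ℝ) ^ 2 * C * M * L ^ (r - deg q) := by
  set P := r - deg q
  set S : (Fin n → ℕ) → ℝ := fun j => ∑ i ∈ range N,
    WRem a r (q + j) (p i) (p (i + 1)) * (mpow (y - p (i + 1)) j / mfact j)
  have htel : WRem a r q x y = S 0 + ∑ j ∈ (MIdx n P).erase 0, S j := by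
    have h0 : (0 : Fin n → ℕ) ∈ MIdx n P := mem_MIdx.2 (by simp)
    have h := WRem_telescope a r q p N
    rwa [hp.zero, hp.eq_of_le N le_rfl, ← add_sum_erase _ _ h0] at h
  have hS0 : |S 0| ≤ ε * L ^ P := by
    simpa only [S, add_zero, deg_zero] using hp.abs_sum_mul_mpow_le hε (e := P) (by omega)
      (fun i => hsmall _ (hp.mem i) _ (hp.mem _) (hp.norm_sub_le i)) 0
  have hSj : ∀ j ∈ (MIdx n P).erase 0, |S j| ≤ #(MIdx n r) * C * M * L ^ P := fun j hj =>
    abs_sum_WRem_mul_mpow_le a hM hp hC hIH (ne_of_mem_erase hj)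
      (by have := mem_MIdx.1 (mem_of_mem_erase hj); omega)
  have hcard : #((MIdx n P).erase 0) ≤ #(MIdx n r) :=
    card_erase_le.trans
      (card_le_card fun j hj => mem_MIdx.2 ((mem_MIdx.1 hj).trans (Nat.sub_le _ _)))
  have hM0 : 0 ≤ M := (abs_nonneg _).trans (hM 0 (by simp) _ (hp.mem 0))
  have hL := hp.length_nonneg
  calc |WRem a r q x y| ≤ |S 0| + ∑ j ∈ (MIdx n P).erase 0, |S j| :=
        htel ▸ (abs_add_le _ _).trans (add_le_add le_rfl (abs_sum_le_sum_abs _ _))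
    _ ≤ ε * L ^ P + #((MIdx n P).erase 0) * (#(MIdx n r) * C * M * L ^ P) := by
        rw [← nsmul_eq_mul]
        exact add_le_add hS0 (sum_le_card_nsmul _ _ _ hSj)
    _ ≤ ε * L ^ P + #(MIdx n r) * (#(MIdx n r) * C * M * L ^ P) := by gcongr
    _ = ε * L ^ P + (#(MIdx n r) : ℝ) ^ 2 * C * M * L ^ P := by ring

lemma abs_WRem_le_step (hK : ChainConnected K c) (hc : 1 ≤ c) (ha : WhitneyCondOn a r r K)
    (hM : ∀ k, deg k ≤ r → ∀ x ∈ K, |a k x| ≤ M) {q : Fin n → ℕ} (hq : deg q < r) {C : ℝ}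
    (hC : 1 ≤ C)
    (hIH : ∀ q', deg q < deg q' → deg q' < r → ∀ u ∈ K, ∀ v ∈ K,
      |WRem a r q' u v| ≤ C * M * ‖v - u‖ ^ (r - deg q'))
    {x y : Fin n → ℝ} (hx : x ∈ K) (hy : y ∈ K) :
    |WRem a r q x y| ≤ remainderConst n r c * C * M * ‖y - x‖ ^ (r - deg q) := by
  have hM0 : 0 ≤ M := (abs_nonneg _).trans (hM 0 (by simp) x hx)
  have hC0 : 0 ≤ C := zero_le_one.trans hC
  have hL : 0 ≤ c * ‖y - x‖ := by positivity
  have hlim : |WRem a r q x y| ≤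
      (#(MIdx n r) : ℝ) ^ 2 * C * M * (c * ‖y - x‖) ^ (r - deg q) := by
    refine le_of_forall_pos_le_mul_add (pow_nonneg hL (r - deg q)) fun ε hε => ?_
    obtain ⟨δ, hδ, hsmall⟩ := ha q hq.le ε hε
    obtain ⟨N, p, hp⟩ := hK x hx y hy δ hδ
    exact abs_WRem_le_of_isFineChain a hM hp hq hε.le hC hsmall hIH
  calc |WRem a r q x y| ≤ (#(MIdx n r) : ℝ) ^ 2 * C * M * (c * ‖y - x‖) ^ (r - deg q) := hlim
    _ = (#(MIdx n r) : ℝ) ^ 2 * c ^ (r - deg q) * C * M * ‖y - x‖ ^ (r - deg q) := by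
        rw [mul_pow]; ring
    _ ≤ remainderConst n r c * C * M * ‖y - x‖ ^ (r - deg q) := by
        have : c ^ (r - deg q) ≤ c ^ r := pow_le_pow_right₀ hc (Nat.sub_le _ _)
        unfold remainderConst
        gcongr

lemma abs_WRem_le (hK : ChainConnected K c) (hc : 1 ≤ c) (ha : WhitneyCondOn a r r K)
    (hM : ∀ k, deg k ≤ r → ∀ x ∈ K, |a k x| ≤ M) (d : ℕ) :
    ∀ q, deg q ≤ r → r - deg q ≤ d → ∀ x ∈ K, ∀ y ∈ K,
      |WRem a r q x y| ≤ 2 * remainderConst n r c ^ d * M * ‖y - x‖ ^ (r - deg q) := by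
  have hB := one_le_remainderConst (n := n) r hc
  induction d with
  | zero =>
    intro q hq hd x hx y hy
    have hqr : deg q = r := by omega
    simpa [hqr] using abs_WRem_le_of_deg_eq a hM hqr hx hy
  | succ d ih =>
    intro q hq hd x hx y hy
    rcases hq.lt_or_eq with hlt | hqr
    · have h := abs_WRem_le_step a hK hc ha hM hlt (C := 2 * remainderConst n r c ^ d)
        (by nlinarith [one_le_pow₀ (n := d) hB])
        (fun q' hqq' hq'r u hu v hv => ih q' hq'r.le (by omega) u hu v hv) hx hy
      calc |WRem a r q x y| ≤ _ := h
        _ = _ := by ring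
    · have hM0 : 0 ≤ M := (abs_nonneg _).trans (hM 0 (by simp) x hx)
      simp only [hqr, tsub_self, pow_zero, mul_one]
      calc |WRem a r q x y| ≤ 2 * M := abs_WRem_le_of_deg_eq a hM hqr hx hy
        _ ≤ 2 * remainderConst n r c ^ (d + 1) * M := by
            have := one_le_pow₀ (n := d + 1) hB
            nlinarith

end Remainder

/-- on a Whitney 1-regular compact set `K`, the Whitney seminorm
`‖A‖^r_K` and the sup seminorm `|A|^r_K` are equivalent on `E^r(K)`: the difference
quotients are bounded by a constant (depending only on `K`) times the sup seminorm. -/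
theorem statement6 {n : ℕ} (r : ℕ) (K : Set (Fin n → ℝ)) (hK : IsCompact K)
    (hreg : WhitneyOneRegular K) :
    ∃ C : ℝ, 0 < C ∧ ∀ a : Jet n, RegularJetOn a r r K →
      ∀ M : ℝ, (∀ k, deg k ≤ r → ∀ x ∈ K, |a k x| ≤ M) →
      ∀ q, deg q ≤ r → ∀ x ∈ K, ∀ y ∈ K, x ≠ y →
        |WRem a r q x y| ≤ C * M * ‖y - x‖ ^ (r - deg q) := by
  obtain ⟨c, hc, hchain⟩ := hreg.exists_chainConnected
  have hB := one_le_remainderConst (n := n) r hc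
  refine ⟨2 * remainderConst n r c ^ r, by positivity, fun a ha M hM q hq x hx y hy _ => ?_⟩
  exact abs_WRem_le a hchain hc (ha.2 K subset_rfl hK) hM r q hq (Nat.sub_le _ _) x hx y hy
end
end
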